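/- Let Φ and φ denote the standard normal CDF and PDF. The function h(x) = x·Φ(x) + φ(x) + x is strictly increasing on ℝ and has a unique real root x̄, and x̄ ∈ (−0.28, −0.27). -/

import Mathlib

open MeasureTheory Real Set

noncomputable def stdphi (x : ℝ) : ℝ := Real.exp (-x ^ 2 / 2) / Real.sqrt (2 * Real.pi)

noncomputable def stdPhi (x : ℝ) : ℝ := ∫ t in Set.Iic x, stdphi t

lemma stdphi_eq : stdphi = fun x => Real.exp (-(1/2) * x ^ 2) * (Real.sqrt (2 * Real.pi))⁻¹ := by
  funext x; rw [stdphi, div_eq_mul_inv]; ring_nf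

lemma integrable_stdphi : Integrable stdphi := by
  rw [stdphi_eq]
  exact (integrable_exp_neg_mul_sq (by norm_num)).mul_const _

lemma continuous_stdphi : Continuous stdphi := by
  unfold stdphi; fun_prop

lemma stdphi_pos (x : ℝ) : 0 < stdphi x := by
  unfold stdphi
  positivity

lemma hasDerivAt_stdPhi (x : ℝ) : HasDerivAt stdPhi (stdphi x) x := by
  have key : ∀ y : ℝ, stdPhi y = stdPhi 0 + ∫ t in (0:ℝ)..y, stdphi t := by
    intro y
    rw [← intervalIntegral.integral_Iic_sub_Iic integrable_stdphi.integrableOn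
      integrable_stdphi.integrableOn]
    unfold stdPhi; ring
  have h1 : HasDerivAt (fun y => stdPhi 0 + ∫ t in (0:ℝ)..y, stdphi t) (stdphi x) x := by
    exact (intervalIntegral.integral_hasDerivAt_right
      (integrable_stdphi.intervalIntegrable)
      (continuous_stdphi.stronglyMeasurableAtFilter _ _)
      continuous_stdphi.continuousAt).const_add _
  exact h1.congr_of_eventuallyEq (Filter.Eventually.of_forall key)

lemma stdPhi_nonneg (x : ℝ) : 0 ≤ stdPhi x :=
  setIntegral_nonneg measurableSet_Iic (fun t _ => (stdphi_pos t).le)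

lemma total_stdphi : ∫ t, stdphi t = 1 := by
  rw [stdphi_eq, integral_mul_const, integral_gaussian]
  have : π / (1/2) = 2 * π := by ring
  rw [this, mul_inv_cancel₀]
  positivity

lemma stdPhi_zero : stdPhi 0 = 1 / 2 := by
  have hsym : (∫ t in Iic (0:ℝ), stdphi t) = ∫ t in Ioi (0:ℝ), stdphi t := by
    have h1 : (∫ t in Iic (0:ℝ), stdphi (-t)) = ∫ t in Ioi (0:ℝ), stdphi t := by
      simpa using integral_comp_neg_Iic 0 stdphi
    rw [← h1]
    congr 1
    funext t
    simp [stdphi, neg_sq]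
  have htot := intervalIntegral.integral_Iic_add_Ioi (b := (0:ℝ))
    integrable_stdphi.integrableOn integrable_stdphi.integrableOn
  rw [total_stdphi] at htot
  unfold stdPhi
  linarith [hsym ▸ htot]

lemma hasDerivAt_stdphi (x : ℝ) : HasDerivAt stdphi (-x * stdphi x) x := by
  have h1 : HasDerivAt (fun y : ℝ => -y ^ 2 / 2) (-x) x := by
    have := ((hasDerivAt_pow 2 x).neg).div_const 2
    refine this.congr_deriv ?_
    ring
  have h2 := (h1.exp).div_const (Real.sqrt (2 * Real.pi))
  refine h2.congr_deriv ?_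
  unfold stdphi
  ring

lemma hasDerivAt_h (x : ℝ) :
    HasDerivAt (fun x : ℝ => x * stdPhi x + stdphi x + x) (stdPhi x + 1) x := by
  have := (((hasDerivAt_id x).mul (hasDerivAt_stdPhi x)).add
    (hasDerivAt_stdphi x)).add (hasDerivAt_id x)
  refine this.congr_deriv ?_
  simp

lemma h_strictMono : StrictMono (fun x : ℝ => x * stdPhi x + stdphi x + x) := by
  apply strictMono_of_deriv_pos
  intro x
  rw [(hasDerivAt_h x).deriv]
  have := stdPhi_nonneg x
  linarith

lemma sqrt2pi_lb : (2.506628 : ℝ) ≤ Real.sqrt (2 * Real.pi) := by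
  rw [show (2.506628:ℝ) = Real.sqrt (2.506628^2) by
    rw [Real.sqrt_sq (by norm_num)]]
  apply Real.sqrt_le_sqrt
  nlinarith [Real.pi_gt_d6]

lemma sqrt2pi_ub : Real.sqrt (2 * Real.pi) ≤ 2.506629 := by
  rw [show (2.506629:ℝ) = Real.sqrt (2.506629^2) by
    rw [Real.sqrt_sq (by norm_num)]]
  apply Real.sqrt_le_sqrt
  nlinarith [Real.pi_lt_d6]

lemma exp_neg_lb (u : ℝ) : 1 - u ≤ Real.exp (-u) := by
  have := Real.add_one_le_exp (-u); linarith

lemma exp_neg_ub (u : ℝ) (hu : 0 ≤ u) : Real.exp (-u) ≤ 1 - u + u ^ 2 := by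
  have h1 : (1 + u) * Real.exp (-u) ≤ 1 := by
    have h2 := Real.add_one_le_exp u
    have h3 : Real.exp u * Real.exp (-u) = 1 := by rw [← Real.exp_add]; simp
    nlinarith [Real.exp_pos (-u)]
  nlinarith [Real.exp_pos (-u)]

lemma int_poly_lb (a : ℝ) : ∫ t in (-a)..(0:ℝ), (1 - t ^ 2 / 2) = a - a ^ 3 / 6 := by
  have e2 := integral_pow (a := -a) (b := 0) 2
  have hc1 : Continuous fun _ : ℝ => (1:ℝ) := continuous_const
  have hi1 : IntervalIntegrable (fun _ : ℝ => (1:ℝ)) volume (-a) 0 :=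
    hc1.intervalIntegrable _ _
  have hi2 : IntervalIntegrable (fun t : ℝ => t ^ 2 / 2) volume (-a) 0 :=
    (by fun_prop : Continuous fun t : ℝ => t ^ 2 / 2).intervalIntegrable _ _
  rw [intervalIntegral.integral_sub hi1 hi2, intervalIntegral.integral_div, e2]
  simp
  ring

lemma int_poly_ub (a : ℝ) :
    ∫ t in (-a)..(0:ℝ), (1 - t ^ 2 / 2 + t ^ 4 / 4) = a - a ^ 3 / 6 + a ^ 5 / 20 := by
  have e4 := integral_pow (a := -a) (b := 0) 4
  have hc1 : Continuous fun t : ℝ => (1 - t ^ 2 / 2) := by fun_prop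
  have hi1 : IntervalIntegrable (fun t : ℝ => (1 - t ^ 2 / 2)) volume (-a) 0 :=
    hc1.intervalIntegrable _ _
  have hi2 : IntervalIntegrable (fun t : ℝ => t ^ 4 / 4) volume (-a) 0 :=
    (by fun_prop : Continuous fun t : ℝ => t ^ 4 / 4).intervalIntegrable _ _
  rw [intervalIntegral.integral_add hi1 hi2, intervalIntegral.integral_div, e4, int_poly_lb]
  simp
  ring

lemma exp_int_lb (a : ℝ) (ha : 0 ≤ a) :
    a - a ^ 3 / 6 ≤ ∫ t in (-a)..(0:ℝ), Real.exp (-t ^ 2 / 2) := by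
  rw [← int_poly_lb a]
  apply intervalIntegral.integral_mono_on (by linarith)
    ((by fun_prop : Continuous fun t : ℝ => (1 - t ^ 2 / 2)).intervalIntegrable _ _)
    ((by fun_prop : Continuous fun t : ℝ => Real.exp (-t ^ 2 / 2)).intervalIntegrable _ _)
  intro t _
  have := exp_neg_lb (t ^ 2 / 2)
  rw [show -t ^ 2 / 2 = -(t ^ 2 / 2) by ring]
  linarith

lemma exp_int_ub (a : ℝ) (ha : 0 ≤ a) :
    (∫ t in (-a)..(0:ℝ), Real.exp (-t ^ 2 / 2)) ≤ a - a ^ 3 / 6 + a ^ 5 / 20 := by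
  rw [← int_poly_ub a]
  apply intervalIntegral.integral_mono_on (by linarith)
    ((by fun_prop : Continuous fun t : ℝ => Real.exp (-t ^ 2 / 2)).intervalIntegrable _ _)
    ((by fun_prop : Continuous fun t : ℝ => (1 - t ^ 2 / 2 + t ^ 4 / 4)).intervalIntegrable _ _)
  intro t _
  have := exp_neg_ub (t ^ 2 / 2) (by positivity)
  rw [show -t ^ 2 / 2 = -(t ^ 2 / 2) by ring]
  nlinarith

lemma stdPhi_neg (a : ℝ) :
    stdPhi (-a) = 1 / 2 -
      (∫ t in (-a)..(0:ℝ), Real.exp (-t ^ 2 / 2)) / Real.sqrt (2 * Real.pi) := by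
  have key := intervalIntegral.integral_Iic_sub_Iic (a := -a) (b := (0:ℝ))
    integrable_stdphi.integrableOn integrable_stdphi.integrableOn
  have hdiv : (∫ t in (-a)..(0:ℝ), stdphi t) =
      (∫ t in (-a)..(0:ℝ), Real.exp (-t ^ 2 / 2)) / Real.sqrt (2 * Real.pi) := by
    rw [← intervalIntegral.integral_div]
    rfl
  have h0 : (∫ x in Iic (0:ℝ), stdphi x) = 1 / 2 := stdPhi_zero
  rw [h0] at key
  rw [← hdiv, ← key]
  unfold stdPhi
  ring

lemma h_neg : (-0.28:ℝ) * stdPhi (-0.28) + stdphi (-0.28) + (-0.28) < 0 := by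
  have hS1 := sqrt2pi_lb
  have hS2 := sqrt2pi_ub
  set S := Real.sqrt (2 * Real.pi) with hSdef
  have hS0 : (0:ℝ) < S := by linarith
  set J := ∫ t in (-(0.28:ℝ))..(0:ℝ), Real.exp (-t ^ 2 / 2) with hJ
  have hPhi : stdPhi (-0.28) = 1 / 2 - J / S := stdPhi_neg 0.28
  have hJub : J ≤ 0.28 - 0.28 ^ 3 / 6 + 0.28 ^ 5 / 20 := exp_int_ub 0.28 (by norm_num)
  have hphi : stdphi (-0.28) = Real.exp (-(0.28:ℝ) ^ 2 / 2) / S := by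
    unfold stdphi
    rw [← hSdef]
    congr 1
    norm_num
  have hE1 : Real.exp (-(0.28:ℝ) ^ 2 / 2) ≤ 1 - 0.28 ^ 2 / 2 + (0.28 ^ 2 / 2) ^ 2 := by
    have := exp_neg_ub ((0.28:ℝ) ^ 2 / 2) (by norm_num)
    rw [show -(0.28:ℝ) ^ 2 / 2 = -((0.28:ℝ) ^ 2 / 2) by ring]
    exact this
  rw [hPhi, hphi]
  have key : 0.28 * J + Real.exp (-(0.28:ℝ) ^ 2 / 2) < 0.42 * S := by nlinarith
  have heq : (-0.28:ℝ) * (1 / 2 - J / S) + Real.exp (-(0.28:ℝ) ^ 2 / 2) / S + (-0.28)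
      = (0.28 * J + Real.exp (-(0.28:ℝ) ^ 2 / 2)) / S - 0.42 := by
    field_simp
    ring
  rw [heq, sub_neg, div_lt_iff₀ hS0]
  linarith

lemma h_pos : 0 < (-0.27:ℝ) * stdPhi (-0.27) + stdphi (-0.27) + (-0.27) := by
  have hS1 := sqrt2pi_lb
  have hS2 := sqrt2pi_ub
  set S := Real.sqrt (2 * Real.pi) with hSdef
  have hS0 : (0:ℝ) < S := by linarith
  set J := ∫ t in (-(0.27:ℝ))..(0:ℝ), Real.exp (-t ^ 2 / 2) with hJ
  have hPhi : stdPhi (-0.27) = 1 / 2 - J / S := stdPhi_neg 0.27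
  have hJlb : 0.27 - 0.27 ^ 3 / 6 ≤ J := exp_int_lb 0.27 (by norm_num)
  have hphi : stdphi (-0.27) = Real.exp (-(0.27:ℝ) ^ 2 / 2) / S := by
    unfold stdphi
    rw [← hSdef]
    congr 1
    norm_num
  have hE1 : 1 - 0.27 ^ 2 / 2 ≤ Real.exp (-(0.27:ℝ) ^ 2 / 2) := by
    have := exp_neg_lb ((0.27:ℝ) ^ 2 / 2)
    rw [show -(0.27:ℝ) ^ 2 / 2 = -((0.27:ℝ) ^ 2 / 2) by ring]
    exact this
  rw [hPhi, hphi]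
  have key : 0.405 * S < 0.27 * J + Real.exp (-(0.27:ℝ) ^ 2 / 2) := by nlinarith
  have heq : (-0.27:ℝ) * (1 / 2 - J / S) + Real.exp (-(0.27:ℝ) ^ 2 / 2) / S + (-0.27)
      = (0.27 * J + Real.exp (-(0.27:ℝ) ^ 2 / 2)) / S - 0.405 := by
    field_simp
    ring
  rw [heq, sub_pos, lt_div_iff₀ hS0]
  linarith

theorem stmt_10 :
    StrictMono (fun x : ℝ => x * stdPhi x + stdphi x + x)
    ∧ ∃ xbar : ℝ, (xbar * stdPhi xbar + stdphi xbar + xbar = 0)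
        ∧ (∀ y : ℝ, y * stdPhi y + stdphi y + y = 0 → y = xbar)
        ∧ xbar ∈ Set.Ioo (-0.28 : ℝ) (-0.27) := by
  refine ⟨h_strictMono, ?_⟩
  have hc : ContinuousOn (fun x : ℝ => x * stdPhi x + stdphi x + x)
      (Icc (-0.28 : ℝ) (-0.27)) :=
    fun x _ => (hasDerivAt_h x).continuousAt.continuousWithinAt
  have h0 : (0:ℝ) ∈ Ioo ((fun x : ℝ => x * stdPhi x + stdphi x + x) (-0.28))
      ((fun x : ℝ => x * stdPhi x + stdphi x + x) (-0.27)) := ⟨h_neg, h_pos⟩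
  obtain ⟨x, hx, hfx⟩ := intermediate_value_Ioo (by norm_num) hc h0
  exact ⟨x, hfx, fun y hy => h_strictMono.injective (by simpa using hy.trans hfx.symm), hx⟩
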